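/- Let S_+ : 𝕋 → ℂ^{d×d} be a matrix function each of whose entries S_+^{(jk)} belongs to H², and suppose that for every row vector g = (g_1, …, g_d) with each g_k ∈ H², the infimum over row vectors of polynomials Q = (Q_1, …, Q_d) of ‖g − Q S_+‖_{(L²(𝕋))^{1×d}} is 0. Then for every L ≥ 1 and every j ∈ {1, …, d}, the infimum over row vectors of polynomials Q of ‖(e_j t^{−L} − Q(t)) S_+(t)‖²_{(L²(𝕋))^{1×d}} equals ∑_{k=1}^{d} ∑_{n=0}^{L−1} |c_n{S_+^{(jk)}}|², where e_j ∈ ℂ^{1×d} is the j-th standard basis row vector. -/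

import Mathlib

/-! Write `t⁻ᴸ S₊^{(jk)} = P_k + h_k`, where `P_k = ∑_{n<L} c_n{S₊^{(jk)}} t^{n-L}` collects the
negative frequencies and `h_k ∈ H²`. The `k`-th entry of `(e_j t⁻ᴸ - Q) S₊` is then
`P_k + (h_k - (Q S₊)_k)`, a sum of two functions with disjoint Fourier spectra, so by Parseval its
squared norm is `∑_{n<L} |c_n{S₊^{(jk)}}|² + ‖h_k - (Q S₊)_k‖²`. The first term does not depend on
`Q`, and the density hypothesis applied to `(h_k)_k` makes the second one arbitrarily small. -/

open MeasureTheory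

/-- The `n`-th Fourier coefficient of a function on the unit circle:
`c_n{f} = (1/2π) ∫₀^{2π} f(e^{iθ}) e^{−inθ} dθ`. -/
noncomputable def fourierCoef (f : ℂ → ℂ) (n : ℤ) : ℂ :=
  (1 / (2 * Real.pi) : ℂ) * ∫ θ in (0:ℝ)..(2 * Real.pi),
    f (Complex.exp (θ * Complex.I)) * Complex.exp (-(n : ℂ) * θ * Complex.I)

/-- `f ∈ L²(𝕋)`. -/
def MemL2Circle (f : ℂ → ℂ) : Prop :=
  MeasureTheory.MemLp (fun θ : ℝ => f (Complex.exp (θ * Complex.I))) 2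
    (MeasureTheory.volume.restrict (Set.Ioc 0 (2 * Real.pi)))

/-- `f ∈ H²`: `f ∈ L²(𝕋)` with vanishing negative Fourier coefficients. -/
def MemH2 (f : ℂ → ℂ) : Prop :=
  MemL2Circle f ∧ ∀ n : ℤ, n < 0 → fourierCoef f n = 0

/-- The squared `L²(𝕋)` norm: `‖f‖² = (1/2π) ∫₀^{2π} |f(e^{iθ})|² dθ`. -/
noncomputable def l2NormSqCircle (f : ℂ → ℂ) : ℝ :=
  (1 / (2 * Real.pi)) * ∫ θ in (0:ℝ)..(2 * Real.pi),
    ‖f (Complex.exp (θ * Complex.I))‖ ^ 2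

open Complex Finset

lemma exp_mul_I_zpow (θ : ℝ) (m : ℤ) : exp (θ * I) ^ m = exp (m * θ * I) := by
  rw [← exp_int_mul, mul_assoc]

lemma norm_exp_mul_I_zpow (θ : ℝ) (m : ℤ) : ‖exp (θ * I) ^ m‖ = 1 := by
  rw [norm_zpow, norm_exp_ofReal_mul_I, one_zpow]

lemma integral_exp_int_mul_I (m : ℤ) :
    ∫ θ in (0:ℝ)..(2 * Real.pi), exp (m * θ * I) =
      if m = 0 then ((2 * Real.pi : ℝ) : ℂ) else 0 := by
  split_ifs with hm
  · simp [hm]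
  have hmI : (m : ℂ) * I ≠ 0 := mul_ne_zero (by exact_mod_cast hm) I_ne_zero
  simp_rw [mul_comm _ I, ← mul_assoc, mul_comm I]
  rw [integral_exp_mul_complex hmI]
  have : (m : ℂ) * I * (2 * Real.pi : ℝ) = m * (2 * Real.pi * I) := by push_cast; ring
  push_cast at this ⊢
  rw [this, exp_int_mul_two_pi_mul_I]
  simp

lemma fourierCoef_eq_fourierCoeffOn (f : ℂ → ℂ) (n : ℤ) :
    fourierCoef f n = fourierCoeffOn Real.two_pi_pos (fun θ : ℝ => f (exp (θ * I))) n := by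
  rw [fourierCoeffOn_eq_integral, fourierCoef, real_smul, sub_zero]
  push_cast
  congr 1
  refine intervalIntegral.integral_congr fun θ _ => ?_
  simp only [fourier_coe_apply, smul_eq_mul, mul_comm (f _)]
  congr 1
  push_cast
  field_simp

lemma hasSum_sq_norm_fourierCoef {f : ℂ → ℂ} (hf : MemL2Circle f) :
    HasSum (fun n => ‖fourierCoef f n‖ ^ 2) (l2NormSqCircle f) := by
  have := hasSum_sq_fourierCoeffOn Real.two_pi_pos hf
  simp_rw [← fourierCoef_eq_fourierCoeffOn, sub_zero, smul_eq_mul, ← one_div] at this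
  exact this

lemma MemL2Circle.intervalIntegrable {f : ℂ → ℂ} (hf : MemL2Circle f) :
    IntervalIntegrable (fun θ : ℝ => f (exp (θ * I))) volume 0 (2 * Real.pi) :=
  (intervalIntegrable_iff_integrableOn_Ioc_of_le Real.two_pi_pos.le).2 (hf.integrable one_le_two)

lemma MemL2Circle.intervalIntegrable_mul_exp {f : ℂ → ℂ} (hf : MemL2Circle f) (n : ℤ) :
    IntervalIntegrable (fun θ : ℝ => f (exp (θ * I)) * exp (-(n : ℂ) * θ * I))
      volume 0 (2 * Real.pi) :=
  hf.intervalIntegrable.mul_continuousOn (by fun_prop)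

lemma MemL2Circle.zpow_mul {f : ℂ → ℂ} (hf : MemL2Circle f) (m : ℤ) :
    MemL2Circle (fun t => t ^ m * f t) := by
  refine MemLp.of_le hf ?_ (Filter.Eventually.of_forall fun θ => ?_)
  · simp_rw [exp_mul_I_zpow]
    exact (by fun_prop : Continuous fun θ : ℝ => exp (m * θ * I)).aestronglyMeasurable.mul hf.1
  · rw [norm_mul, norm_exp_mul_I_zpow, one_mul]

lemma memL2Circle_const_mul_zpow (a : ℂ) (m : ℤ) : MemL2Circle (fun t => a * t ^ m) := by
  have ha : MemL2Circle fun _ => a := memLp_const a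
  simpa [mul_comm a] using ha.zpow_mul m

lemma MemL2Circle.add {f g : ℂ → ℂ} (hf : MemL2Circle f) (hg : MemL2Circle g) :
    MemL2Circle (fun t => f t + g t) :=
  MemLp.add hf hg

lemma MemL2Circle.sub {f g : ℂ → ℂ} (hf : MemL2Circle f) (hg : MemL2Circle g) :
    MemL2Circle (fun t => f t - g t) :=
  MemLp.sub hf hg

lemma fourierCoef_add {f g : ℂ → ℂ} (hf : MemL2Circle f) (hg : MemL2Circle g) (n : ℤ) :
    fourierCoef (fun t => f t + g t) n = fourierCoef f n + fourierCoef g n := by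
  simp only [fourierCoef, add_mul, ← mul_add,
    intervalIntegral.integral_add (hf.intervalIntegrable_mul_exp n)
      (hg.intervalIntegrable_mul_exp n)]

lemma fourierCoef_sub {f g : ℂ → ℂ} (hf : MemL2Circle f) (hg : MemL2Circle g) (n : ℤ) :
    fourierCoef (fun t => f t - g t) n = fourierCoef f n - fourierCoef g n := by
  simp only [fourierCoef, sub_mul, ← mul_sub,
    intervalIntegral.integral_sub (hf.intervalIntegrable_mul_exp n)
      (hg.intervalIntegrable_mul_exp n)]

lemma fourierCoef_sum {ι : Type*} {s : Finset ι} {f : ι → ℂ → ℂ}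
    (hf : ∀ i ∈ s, MemL2Circle (f i)) (n : ℤ) :
    fourierCoef (fun t => ∑ i ∈ s, f i t) n = ∑ i ∈ s, fourierCoef (f i) n := by
  simp only [fourierCoef, sum_mul, ← mul_sum,
    intervalIntegral.integral_finsetSum fun i hi => (hf i hi).intervalIntegrable_mul_exp n]

lemma fourierCoef_const_mul (f : ℂ → ℂ) (a : ℂ) (n : ℤ) :
    fourierCoef (fun t => a * f t) n = a * fourierCoef f n := by
  simp only [fourierCoef, mul_assoc, ← intervalIntegral.integral_const_mul, mul_left_comm a]

lemma fourierCoef_zpow_mul (f : ℂ → ℂ) (m n : ℤ) :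
    fourierCoef (fun t => t ^ m * f t) n = fourierCoef f (n - m) := by
  unfold fourierCoef
  congr 1
  refine intervalIntegral.integral_congr fun θ _ => ?_
  simp only [exp_mul_I_zpow, mul_comm _ (f _), mul_assoc, ← exp_add]
  push_cast
  ring_nf

lemma fourierCoef_zpow (m n : ℤ) :
    fourierCoef (fun t => t ^ m) n = if n = m then 1 else 0 := by
  have h1 : ∀ θ : ℝ, exp (θ * I) ^ m * exp (-(n : ℂ) * θ * I) = exp ((m - n : ℤ) * θ * I) := by
    intro θ
    rw [exp_mul_I_zpow, ← exp_add]
    push_cast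
    ring_nf
  simp only [fourierCoef, h1, integral_exp_int_mul_I, sub_eq_zero, eq_comm (a := m)]
  split_ifs
  · push_cast
    field_simp
  · rw [mul_zero]

def hardySpace : Submodule ℂ (ℂ → ℂ) where
  carrier := {f | MemH2 f}
  zero_mem' := ⟨memLp_const 0, fun n _ => by simp [fourierCoef]⟩
  add_mem' {f g} hf hg := ⟨hf.1.add hg.1, fun n hn => by
    simp only [Pi.add_def]
    rw [fourierCoef_add hf.1 hg.1, hf.2 n hn, hg.2 n hn, add_zero]⟩
  smul_mem' a f hf := ⟨MemLp.const_smul hf.1 a, fun n hn => by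
    simp only [Pi.smul_def, smul_eq_mul]
    rw [fourierCoef_const_mul, hf.2 n hn, mul_zero]⟩

lemma MemH2.sub {f g : ℂ → ℂ} (hf : MemH2 f) (hg : MemH2 g) : MemH2 (fun t => f t - g t) :=
  hardySpace.sub_mem hf hg

lemma MemH2.sum {ι : Type*} {s : Finset ι} {f : ι → ℂ → ℂ} (hf : ∀ i ∈ s, MemH2 (f i)) :
    MemH2 (fun t => ∑ i ∈ s, f i t) := by
  rw [← funext fun t => Finset.sum_apply t s f]
  exact hardySpace.sum_mem hf

lemma MemH2.pow_mul {f : ℂ → ℂ} (hf : MemH2 f) (m : ℕ) : MemH2 (fun t => t ^ m * f t) := by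
  simp_rw [← zpow_natCast]
  refine ⟨hf.1.zpow_mul m, fun n hn => ?_⟩
  rw [fourierCoef_zpow_mul, hf.2 _ (by omega)]

lemma MemH2.polynomial_eval_mul {f : ℂ → ℂ} (hf : MemH2 f) (P : Polynomial ℂ) :
    MemH2 (fun t => P.eval t * f t) := by
  simp_rw [Polynomial.eval_eq_sum_range, sum_mul, mul_assoc]
  exact MemH2.sum fun m _ => hardySpace.smul_mem (P.coeff m) (hf.pow_mul m)

lemma l2NormSqCircle_add_of_disjoint {f g : ℂ → ℂ} (hf : MemL2Circle f) (hg : MemL2Circle g)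
    (hfg : ∀ n, fourierCoef f n = 0 ∨ fourierCoef g n = 0) :
    l2NormSqCircle (fun t => f t + g t) = l2NormSqCircle f + l2NormSqCircle g := by
  refine (hasSum_sq_norm_fourierCoef (hf.add hg)).unique ?_
  convert (hasSum_sq_norm_fourierCoef hf).add (hasSum_sq_norm_fourierCoef hg) using 2 with n
  rw [fourierCoef_add hf hg]
  rcases hfg n with h | h <;> simp [h]

noncomputable def fourierPartialSum (g : ℂ → ℂ) (s : Finset ℤ) : ℂ → ℂ :=
  fun t => ∑ m ∈ s, fourierCoef g m * t ^ m

lemma memL2Circle_fourierPartialSum (g : ℂ → ℂ) (s : Finset ℤ) :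
    MemL2Circle (fourierPartialSum g s) :=
  memLp_finsetSum s fun m _ => memL2Circle_const_mul_zpow (fourierCoef g m) m

lemma fourierCoef_fourierPartialSum (g : ℂ → ℂ) (s : Finset ℤ) (n : ℤ) :
    fourierCoef (fourierPartialSum g s) n = if n ∈ s then fourierCoef g n else 0 := by
  unfold fourierPartialSum
  rw [fourierCoef_sum fun m _ => memL2Circle_const_mul_zpow _ m]
  simp only [fourierCoef_const_mul, fourierCoef_zpow, mul_ite, mul_one, mul_zero, sum_ite_eq]

lemma l2NormSqCircle_fourierPartialSum (g : ℂ → ℂ) (s : Finset ℤ) :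
    l2NormSqCircle (fourierPartialSum g s) = ∑ m ∈ s, ‖fourierCoef g m‖ ^ 2 := by
  have hsum : HasSum (fun n => ‖fourierCoef (fourierPartialSum g s) n‖ ^ 2)
      (∑ n ∈ s, ‖fourierCoef (fourierPartialSum g s) n‖ ^ 2) :=
    hasSum_sum_of_ne_finset_zero fun n hn => by
      rw [fourierCoef_fourierPartialSum, if_neg hn, norm_zero, sq, mul_zero]
  rw [(hasSum_sq_norm_fourierCoef (memL2Circle_fourierPartialSum g s)).unique hsum]
  exact sum_congr rfl fun n hn => by rw [fourierCoef_fourierPartialSum, if_pos hn]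

lemma l2NormSqCircle_nonneg (f : ℂ → ℂ) : 0 ≤ l2NormSqCircle f :=
  mul_nonneg (by positivity) <|
    intervalIntegral.integral_nonneg Real.two_pi_pos.le fun _ _ => by positivity

lemma memH2_sub_fourierPartialSum {g : ℂ → ℂ} {s : Finset ℤ} (hg : MemL2Circle g)
    (hgs : ∀ n < 0, n ∉ s → fourierCoef g n = 0) :
    MemH2 (fun t => g t - fourierPartialSum g s t) := by
  have hS := memL2Circle_fourierPartialSum g s
  refine ⟨hg.sub hS, fun n hn => ?_⟩
  rw [fourierCoef_sub hg hS, fourierCoef_fourierPartialSum]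
  split_ifs with h
  · exact sub_self _
  · rw [hgs n hn h, sub_zero]

lemma l2NormSqCircle_sub_eq_sum_add {g u : ℂ → ℂ} {s : Finset ℤ} (hg : MemL2Circle g)
    (hs : ∀ n ∈ s, n < 0) (hgs : ∀ n < 0, n ∉ s → fourierCoef g n = 0) (hu : MemH2 u) :
    l2NormSqCircle (fun t => g t - u t) = ∑ n ∈ s, ‖fourierCoef g n‖ ^ 2 +
      l2NormSqCircle (fun t => g t - fourierPartialSum g s t - u t) := by
  have hrest := (memH2_sub_fourierPartialSum hg hgs).sub hu
  have hdisj : ∀ n, fourierCoef (fourierPartialSum g s) n = 0 ∨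
      fourierCoef (fun t => g t - fourierPartialSum g s t - u t) n = 0 := fun n => by
    by_cases hn : n ∈ s
    · exact .inr (hrest.2 n (hs n hn))
    · exact .inl (by rw [fourierCoef_fourierPartialSum, if_neg hn])
  rw [← l2NormSqCircle_fourierPartialSum,
    ← l2NormSqCircle_add_of_disjoint (memL2Circle_fourierPartialSum g s) hrest.1 hdisj]
  congr 1
  ext t
  ring

lemma MemH2.fourierCoef_zpow_neg_mul_eq_zero {f : ℂ → ℂ} (hf : MemH2 f) (L : ℕ) :
    ∀ n < 0, n ∉ Ico (-(L : ℤ)) 0 → fourierCoef (fun t => t ^ (-(L : ℤ)) * f t) n = 0 :=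
  fun n hn hns => by
    rw [fourierCoef_zpow_mul]
    exact hf.2 _ (by simp only [mem_Ico, not_and_or, not_le, not_lt] at hns; omega)

lemma sum_Ico_norm_fourierCoef_zpow_neg_mul (f : ℂ → ℂ) (L : ℕ) :
    ∑ n ∈ Ico (-(L : ℤ)) 0, ‖fourierCoef (fun t => t ^ (-(L : ℤ)) * f t) n‖ ^ 2 =
      ∑ n ∈ range L, ‖fourierCoef f n‖ ^ 2 := by
  rw [Int.Ico_eq_finset_map, sum_map]
  refine sum_congr (by simp) fun n _ => ?_
  rw [fourierCoef_zpow_mul]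
  simp

lemma sInf_add_eq_of_sInf_sqrt_eq_zero {ι : Type*} [Nonempty ι] {E : ι → ℝ} (hE : ∀ i, 0 ≤ E i)
    (h : sInf {r | ∃ i, r = √(E i)} = 0) (C : ℝ) : sInf {r | ∃ i, r = C + E i} = C := by
  refine csInf_eq_of_forall_ge_of_forall_gt_exists_lt ⟨_, Classical.arbitrary ι, rfl⟩ ?_ ?_
  · rintro _ ⟨i, rfl⟩
    linarith [hE i]
  · intro w hw
    set R := {r | ∃ i, r = √(E i)}
    have hlt : sInf R < √(w - C) := h ▸ Real.sqrt_pos.2 (sub_pos.2 hw)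
    obtain ⟨_, ⟨i, rfl⟩, hi⟩ := exists_lt_of_csInf_lt (s := R) ⟨_, Classical.arbitrary ι, rfl⟩ hlt
    refine ⟨_, ⟨i, rfl⟩, ?_⟩
    linarith [(Real.sqrt_lt_sqrt_iff (hE i)).1 hi]

theorem inf_row_polynomial_approx_eq_sum_fourier_coeff_sq_general
    {d : ℕ} (Sp : ℂ → Matrix (Fin d) (Fin d) ℂ)
    (hSp : ∀ j k : Fin d, MemH2 (fun t => Sp t j k))
    (hdense : ∀ g : Fin d → (ℂ → ℂ), (∀ k : Fin d, MemH2 (g k)) →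
      sInf {r : ℝ | ∃ Q : Fin d → Polynomial ℂ,
        r = Real.sqrt (∑ k : Fin d,
          l2NormSqCircle (fun t => g k t - ∑ l : Fin d, (Q l).eval t * Sp t l k))} = 0)
    (L : ℕ) (j : Fin d) :
    sInf {r : ℝ | ∃ Q : Fin d → Polynomial ℂ,
        r = ∑ k : Fin d, l2NormSqCircle (fun t =>
          ∑ l : Fin d, ((if l = j then t ^ (-(L : ℤ)) else 0) - (Q l).eval t) * Sp t l k)} =
      ∑ k : Fin d, ∑ n ∈ Finset.range L, ‖fourierCoef (fun t => Sp t j k) n‖ ^ 2 := by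
  set s := Ico (-(L : ℤ)) 0
  set g : Fin d → ℂ → ℂ := fun k t => t ^ (-(L : ℤ)) * Sp t j k
  have hg k : MemL2Circle (g k) := (hSp j k).1.zpow_mul _
  have hgs k := (hSp j k).fourierCoef_zpow_neg_mul_eq_zero L
  have hQS (Q : Fin d → Polynomial ℂ) k : MemH2 (fun t => ∑ l, (Q l).eval t * Sp t l k) :=
    MemH2.sum fun l _ => (hSp l k).polynomial_eval_mul (Q l)
  have hsplit (Q : Fin d → Polynomial ℂ) :
      ∑ k, l2NormSqCircle (fun t =>
          ∑ l, ((if l = j then t ^ (-(L : ℤ)) else 0) - (Q l).eval t) * Sp t l k) =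
        ∑ k, ∑ n ∈ range L, ‖fourierCoef (fun t => Sp t j k) n‖ ^ 2 +
          ∑ k, l2NormSqCircle (fun t =>
            g k t - fourierPartialSum (g k) s t - ∑ l, (Q l).eval t * Sp t l k) := by
    rw [← sum_add_distrib]
    refine sum_congr rfl fun k _ => ?_
    rw [← sum_Ico_norm_fourierCoef_zpow_neg_mul, ← l2NormSqCircle_sub_eq_sum_add (hg k)
      (fun n hn => (mem_Ico.1 hn).2) (hgs k) (hQS Q k)]
    simp [g, sub_mul, sum_sub_distrib, ite_mul]
  simp_rw [hsplit]
  exact sInf_add_eq_of_sInf_sqrt_eq_zero (fun Q => sum_nonneg fun k _ => l2NormSqCircle_nonneg _)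
    (hdense (fun k t => g k t - fourierPartialSum (g k) s t)
      fun k => memH2_sub_fourierPartialSum (hg k) (hgs k)) _

/-- Let `S₊ : 𝕋 → ℂ^{d×d}` have all entries in `H²`, and suppose
`{Q S₊ : Q a row vector of polynomials}` is dense in `(H²)^{1×d}`. Then for every
`L ≥ 1` and every `j`,
`inf_Q ‖(e_j t^{−L} − Q(t)) S₊(t)‖²_{(L²(𝕋))^{1×d}} = ∑_k ∑_{n=0}^{L−1} |c_n{S₊^{(jk)}}|²`. -/
theorem inf_row_polynomial_approx_eq_sum_fourier_coeff_sq
    {d : ℕ} (Sp : ℂ → Matrix (Fin d) (Fin d) ℂ)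
    (hSp : ∀ j k : Fin d, MemH2 (fun t => Sp t j k))
    (hdense : ∀ g : Fin d → (ℂ → ℂ), (∀ k : Fin d, MemH2 (g k)) →
      sInf {r : ℝ | ∃ Q : Fin d → Polynomial ℂ,
        r = Real.sqrt (∑ k : Fin d,
          l2NormSqCircle (fun t => g k t - ∑ l : Fin d, (Q l).eval t * Sp t l k))} = 0)
    (L : ℕ) (hL : 1 ≤ L) (j : Fin d) :
    sInf {r : ℝ | ∃ Q : Fin d → Polynomial ℂ,
        r = ∑ k : Fin d, l2NormSqCircle (fun t =>
          ∑ l : Fin d, ((if l = j then t ^ (-(L : ℤ)) else 0) - (Q l).eval t) * Sp t l k)} =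
      ∑ k : Fin d, ∑ n ∈ Finset.range L, ‖fourierCoef (fun t => Sp t j k) n‖ ^ 2 :=
  inf_row_polynomial_approx_eq_sum_fourier_coeff_sq_general Sp hSp hdense L j
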